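/- arXiv:1903.00051 — 4 statements merged into one kernel-verified Lean document; each statement's English description precedes it below -/
import Mathlib

section
/- Let A be a uniform algebra on a compact Hausdorff space Y and let p ∈ Y be a p-point of A (a point of the strong boundary). Then every point derivation of A at p is identically zero. -/
/-!
A point derivation at `p` kills `1` and every product of two functions vanishing at `p`, so it
suffices to factor each `f ∈ A` with `f p = 0` as `f = g * h` with `g p = h p = 0`.

Since `p` is a p-point, for every `n` some `uₙ ∈ A` peaks at `p` with `‖f * uₙ‖ ≤ M / 4ⁿ`
(`M = ‖f‖ + 1`). Then `h = ∑ 2⁻ⁿ (1 - uₙ) ∈ A` vanishes at `p`, `0 ≤ Re h`, and wherever `f` is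
large some `uₙ` is small, which gives `‖f‖ ≤ 32 M (Re h)²` pointwise. As `Re (h + t) ≥ t`, the
function `h + t` is invertible in `A` for `t > 0`, and this bound makes `t ↦ f / (h + t)`
Lipschitz, so `g = lim_{t → 0⁺} f / (h + t)` exists in `A`; it satisfies `f = g * h` and
`‖g‖ ≤ 32 M ‖h‖` pointwise, hence `g p = 0`.
-/

open ContinuousMap

/-- A peak set of a uniform algebra `A` on `Y`: a closed set `P` such that some `f ∈ A`
equals `1` on `P` and has modulus strictly less than `1` off `P`. -/
def IsPeakSet {Y : Type*} [TopologicalSpace Y] (A : Subalgebra ℂ C(Y, ℂ)) (P : Set Y) : Prop :=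
  IsClosed P ∧ ∃ f ∈ A, (∀ y ∈ P, f y = 1) ∧ ∀ y ∉ P, ‖f y‖ < 1

/-- A `p`-point of `A`: a point whose singleton is an intersection of peak sets of `A`.
The strong boundary of `A` is the set of all `p`-points. -/
def IsPPoint {Y : Type*} [TopologicalSpace Y] (A : Subalgebra ℂ C(Y, ℂ)) (p : Y) : Prop :=
  ∃ Ps : Set (Set Y), (∀ P ∈ Ps, IsPeakSet A P) ∧ ⋂₀ Ps = {p}

open Filter Topology

theorem Complex.norm_le_mul_sq_of_re_bound {w : ℂ} {z : ℕ → ℂ} {M r : ℝ} (hwM : ‖w‖ ≤ M)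
    (hz : ∀ n, ‖w * z n‖ ≤ M / 4 ^ n) (hr : ∀ n, (1 - (z n).re) / 2 ^ n ≤ r) :
    ‖w‖ ≤ 32 * M * r ^ 2 := by
  rcases eq_or_ne w 0 with rfl | hw
  · simp only [norm_zero] at hwM ⊢
    positivity
  have ha : 0 < ‖w‖ := norm_pos_iff.mpr hw
  -- `4ⁿ ≤ 2M / ‖w‖ < 4ⁿ⁺¹`: the upper bound makes `z (n + 1)` small, the lower one bounds `‖w‖`
  obtain ⟨n, hn, hn'⟩ := exists_nat_pow_near (x := 2 * M / ‖w‖) (y := (4 : ℝ))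
    (by rw [le_div_iff₀ ha]; linarith) (by norm_num)
  have h4 : (4 : ℝ) ^ n = (2 ^ n) ^ 2 := by rw [← pow_mul, mul_comm, pow_mul]; norm_num
  have h2 : (0 : ℝ) < 2 ^ n := by positivity
  have hzn : ‖z (n + 1)‖ < 1 / 2 := by
    have h := hz (n + 1)
    rw [norm_mul, le_div_iff₀ (by positivity)] at h
    rw [div_lt_iff₀ ha] at hn'
    nlinarith
  have hre : (z (n + 1)).re < 1 / 2 := (Complex.re_le_norm _).trans_lt hzn
  have hr' : 1 / (4 * 2 ^ n) ≤ r := by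
    refine le_trans ?_ (hr (n + 1))
    rw [div_le_div_iff₀ (by positivity) (by positivity), pow_succ]
    nlinarith
  have hwn : ‖w‖ ≤ 2 * M / 4 ^ n := by
    rw [le_div_iff₀ (by positivity)]
    rw [le_div_iff₀ ha] at hn
    linarith
  calc ‖w‖ ≤ 2 * M / 4 ^ n := hwn
    _ = 32 * M * (1 / (4 * 2 ^ n)) ^ 2 := by rw [h4]; field_simp; ring
    _ ≤ 32 * M * r ^ 2 := by
        have : 0 ≤ M := (norm_nonneg w).trans hwM
        gcongr

theorem Complex.norm_one_sub_mul_le {z : ℂ} {t B : ℝ} (ht : 0 < t) (hre : t ≤ z.re) (hB : ‖z‖ ≤ B) :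
    ‖1 - ((t / B ^ 2 : ℝ) : ℂ) * z‖ ≤ 1 - t ^ 2 / (2 * B ^ 2) := by
  have htB : t ≤ B := hre.trans ((Complex.re_le_norm z).trans hB)
  have hB0 : 0 < B := ht.trans_le htB
  set c := t / B ^ 2 with hc
  have hct : c * t = (t / B) ^ 2 := by rw [hc]; field_simp
  have hcB : c * B = t / B := by rw [hc]; field_simp
  have hs : t / B ≤ 1 := (div_le_one hB0).mpr htB
  have hnorm : ‖1 - (c : ℂ) * z‖ ^ 2 = 1 - 2 * c * z.re + c ^ 2 * ‖z‖ ^ 2 := by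
    rw [Complex.sq_norm, Complex.sq_norm, Complex.normSq_apply, Complex.normSq_apply]
    simp only [Complex.sub_re, Complex.one_re, Complex.mul_re, Complex.ofReal_re,
      Complex.ofReal_im, zero_mul, sub_zero, Complex.sub_im, Complex.one_im, Complex.mul_im,
      add_zero, zero_sub, mul_neg, neg_mul, neg_neg]
    ring
  have hsq : ‖1 - (c : ℂ) * z‖ ^ 2 ≤ (1 - (t / B) ^ 2 / 2) ^ 2 := by
    have h1 : c * t ≤ c * z.re := mul_le_mul_of_nonneg_left hre (by positivity)
    have h2 : (c * ‖z‖) ^ 2 ≤ (c * B) ^ 2 :=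
      pow_le_pow_left₀ (by positivity) (mul_le_mul_of_nonneg_left hB (by positivity)) 2
    rw [hnorm]
    nlinarith [sq_nonneg (t / B)]
  have hrhs : 1 - t ^ 2 / (2 * B ^ 2) = 1 - (t / B) ^ 2 / 2 := by field_simp
  rw [hrhs]
  refine (pow_le_pow_iff_left₀ (norm_nonneg _) ?_ two_ne_zero).mp hsq
  nlinarith [sq_nonneg (t / B)]

theorem Complex.norm_mul_le_of_le_mul_norm {w a v : ℂ} {K : ℝ} (hw : ‖w‖ ≤ K * ‖a‖)
    (hav : a * v = 1) : ‖w * v‖ ≤ K := by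
  calc ‖w * v‖ = ‖w‖ * ‖v‖ := norm_mul w v
    _ ≤ K * ‖a‖ * ‖v‖ := by gcongr
    _ = K := by rw [mul_assoc, ← norm_mul, hav, norm_one, mul_one]

theorem Complex.norm_le_mul_norm_add_mul_norm_add {w z : ℂ} {C s s' : ℝ} (hC : 0 ≤ C)
    (hz : 0 ≤ z.re) (hw : ‖w‖ ≤ C * z.re ^ 2) (hs : 0 ≤ s) (hs' : 0 ≤ s') :
    ‖w‖ ≤ C * ‖z + s‖ * ‖z + s'‖ := by
  have hle : ∀ r : ℝ, 0 ≤ r → z.re ≤ ‖z + r‖ := fun r hr =>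
    calc z.re ≤ (z + r).re := by simpa using hr
      _ ≤ ‖z + r‖ := Complex.re_le_norm _
  calc ‖w‖ ≤ C * z.re * z.re := by rwa [mul_assoc, ← sq]
    _ ≤ C * ‖z + s‖ * ‖z + s'‖ := by gcongr <;> exact hle _ ‹_›

section

variable {Y : Type*} [TopologicalSpace Y] {A : Subalgebra ℂ C(Y, ℂ)}

namespace IsPeakSet

theorem exists_norm_le_one {P : Set Y} (hP : IsPeakSet A P) :
    ∃ f ∈ A, (∀ y ∈ P, f y = 1) ∧ (∀ y ∉ P, ‖f y‖ < 1) ∧ ∀ y, ‖f y‖ ≤ 1 := by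
  obtain ⟨-, f, hfA, hf1, hflt⟩ := hP
  refine ⟨f, hfA, hf1, hflt, fun y => ?_⟩
  by_cases hy : y ∈ P
  · simp [hf1 y hy]
  · exact (hflt y hy).le

theorem univ : IsPeakSet A Set.univ :=
  ⟨isClosed_univ, 1, A.one_mem, fun _ _ => by simp, fun y hy => absurd (Set.mem_univ y) hy⟩

theorem inter {P Q : Set Y} (hP : IsPeakSet A P) (hQ : IsPeakSet A Q) :
    IsPeakSet A (P ∩ Q) := by
  obtain ⟨f, hfA, hf1, hflt, hf⟩ := hP.exists_norm_le_one
  obtain ⟨g, hgA, hg1, hglt, hg⟩ := hQ.exists_norm_le_one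
  refine ⟨hP.1.inter hQ.1, f * g, A.mul_mem hfA hgA,
    fun y hy => by simp [hf1 y hy.1, hg1 y hy.2], fun y hy => ?_⟩
  rw [mul_apply, norm_mul]
  rcases not_and_or.mp hy with hyP | hyQ
  · exact mul_lt_one_of_nonneg_of_lt_one_left (norm_nonneg _) (hflt y hyP) (hg y)
  · exact mul_lt_one_of_nonneg_of_lt_one_right (hf y) (norm_nonneg _) (hglt y hyQ)

end IsPeakSet

theorem Set.Finite.isPeakSet_sInter {Ps : Set (Set Y)} (hfin : Ps.Finite)
    (hPs : ∀ P ∈ Ps, IsPeakSet A P) : IsPeakSet A (⋂₀ Ps) := by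
  induction Ps, hfin using Set.Finite.induction_on with
  | empty => simpa using IsPeakSet.univ
  | @insert P Ps _ _ ih =>
    rw [Set.sInter_insert]
    exact (hPs P (Set.mem_insert _ _)).inter (ih fun Q hQ => hPs Q (Set.mem_insert_of_mem _ hQ))

variable [CompactSpace Y]

theorem exists_mul_eq_one_of_le_re (hA : IsClosed (A : Set C(Y, ℂ))) {b : C(Y, ℂ)} (hb : b ∈ A)
    {t : ℝ} (ht : 0 < t) (hre : ∀ y, t ≤ (b y).re) : ∃ v ∈ A, b * v = 1 := by
  -- Neumann series: for `c = t / B²` we get `‖1 - c • b‖ < 1`, so `c • b` is inverted by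
  -- `∑ (1 - c • b)ⁱ`, which lies in the closed algebra `A`
  set B := ‖b‖ + t
  set c : ℂ := ((t / B ^ 2 : ℝ) : ℂ)
  set x := 1 - c • b
  have hx : ‖x‖ < 1 := by
    have htB : t ^ 2 / (2 * B ^ 2) ≤ 1 / 2 := by
      rw [div_le_iff₀ (by positivity)]
      nlinarith [norm_nonneg b]
    have hbound : ‖x‖ ≤ 1 - t ^ 2 / (2 * B ^ 2) := x.norm_le (by linarith) |>.mpr fun y => by
      rw [show x y = 1 - c * b y from rfl]
      exact Complex.norm_one_sub_mul_le ht (hre y)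
        ((b.norm_coe_le_norm y).trans (le_add_of_nonneg_right ht.le))
    have : 0 < t ^ 2 / (2 * B ^ 2) := by positivity
    linarith
  refine ⟨c • ∑' i, x ^ i, A.smul_mem (tsum_mem hA fun i => pow_mem
    (A.sub_mem A.one_mem (A.smul_mem hb c)) i) c, ?_⟩
  rw [mul_smul_comm, ← smul_mul_assoc, ← mul_neg_geom_series x hx, sub_sub_cancel]

theorem norm_mul_sub_mul_le {f h v v' : C(Y, ℂ)} {C s s' : ℝ} (hC : 0 ≤ C)
    (hv : (h + algebraMap ℂ C(Y, ℂ) s) * v = 1) (hv' : (h + algebraMap ℂ C(Y, ℂ) s') * v' = 1)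
    (hf : ∀ y, ‖f y‖ ≤ C * ‖h y + s‖ * ‖h y + s'‖) :
    ‖f * v - f * v'‖ ≤ C * |s - s'| := by
  have hsub : f * v - f * v' = ((s' - s : ℝ) : ℂ) • (f * v * v') := by
    rw [Algebra.smul_def, Complex.ofReal_sub, map_sub]
    linear_combination (f * v') * hv - (f * v) * hv'
  have hbound : ‖f * v * v'‖ ≤ C := (f * v * v').norm_le hC |>.mpr fun y =>
    Complex.norm_mul_le_of_le_mul_norm
      (Complex.norm_mul_le_of_le_mul_norm ((hf y).trans_eq (mul_right_comm _ _ _))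
        (by simpa using congr($hv y))) (by simpa using congr($hv' y))
  rw [hsub, norm_smul, Complex.norm_real, Real.norm_eq_abs, abs_sub_comm, mul_comm]
  gcongr

theorem exists_eq_mul_of_norm_le_mul_re_sq (hA : IsClosed (A : Set C(Y, ℂ))) {f h : C(Y, ℂ)}
    (hf : f ∈ A) (hh : h ∈ A) (hre : ∀ y, 0 ≤ (h y).re) {C : ℝ} (hC : 0 ≤ C)
    (hfh : ∀ y, ‖f y‖ ≤ C * (h y).re ^ 2) :
    ∃ g ∈ A, f = g * h ∧ ∀ y, ‖g y‖ ≤ C * ‖h y‖ := by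
  set t : ℕ → ℝ := fun n => (2 ^ n)⁻¹
  have ht : ∀ n, 0 ≤ t n := fun n => by positivity
  have hkey : ∀ y, ∀ s s' : ℝ, 0 ≤ s → 0 ≤ s' → ‖f y‖ ≤ C * ‖h y + s‖ * ‖h y + s'‖ :=
    fun y s s' => Complex.norm_le_mul_norm_add_mul_norm_add hC (hre y) (hfh y)
  choose v hvA hv using fun n => exists_mul_eq_one_of_le_re hA
    (A.add_mem hh (A.algebraMap_mem ((t n : ℝ) : ℂ))) (t := t n) (by positivity)
    fun y => by simpa using hre y
  have hcauchy : CauchySeq fun n => f * v n := cauchySeq_of_le_geometric_two (C := C) fun n => by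
    rw [dist_eq_norm]
    refine (norm_mul_sub_mul_le hC (hv n) (hv (n + 1))
      fun y => hkey y _ _ (ht n) (ht (n + 1))).trans_eq ?_
    have hdiff : t n - t (n + 1) = 1 / 2 / 2 ^ n := by simp only [t]; field_simp; ring
    rw [hdiff, abs_of_nonneg (by positivity)]
    ring
  obtain ⟨g, hg⟩ := cauchySeq_tendsto_of_complete hcauchy
  refine ⟨g, hA.mem_of_tendsto hg (.of_forall fun n => A.mul_mem hf (hvA n)), ?_, fun y => ?_⟩
  · have ht0 : Tendsto (fun n => algebraMap ℂ C(Y, ℂ) (t n)) atTop (𝓝 0) := by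
      have := ((continuous_algebraMap ℂ C(Y, ℂ)).comp Complex.continuous_ofReal).tendsto 0
        |>.comp (tendsto_inv_atTop_zero.comp (tendsto_pow_atTop_atTop_of_one_lt one_lt_two))
      rwa [Function.comp_apply, Complex.ofReal_zero, map_zero] at this
    refine tendsto_nhds_unique (tendsto_const_nhds.congr fun n => ?_)
      (hg.mul (by simpa using tendsto_const_nhds.add ht0))
    rw [mul_assoc, mul_comm (v n), hv n, mul_one]
  · refine le_of_tendsto' ((continuous_eval_const y).norm.tendsto g |>.comp hg) fun n => ?_
    have := hkey y 0 (t n) le_rfl (ht n)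
    rw [Complex.ofReal_zero, add_zero] at this
    exact Complex.norm_mul_le_of_le_mul_norm this (by simpa using congr($(hv n) y))

namespace IsPPoint

variable {p : Y}

theorem exists_isPeakSet_subset (hp : IsPPoint A p) {U : Set Y} (hU : IsOpen U) (hpU : p ∈ U) :
    ∃ K, IsPeakSet A K ∧ p ∈ K ∧ K ⊆ U := by
  obtain ⟨Ps, hPs, hInt⟩ := hp
  have hcover : Uᶜ ⊆ ⋃ P ∈ Ps, Pᶜ := by
    intro y hy
    have hyInt : y ∉ ⋂₀ Ps := by
      rw [hInt]
      exact fun hyp => hy (hyp ▸ hpU)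
    simpa [Set.mem_sInter] using hyInt
  obtain ⟨Fs, hFsPs, hFs, hcoverFs⟩ := hU.isClosed_compl.isCompact.elim_finite_subcover_image
    (fun P hP => (hPs P hP).1.isOpen_compl) hcover
  refine ⟨⋂₀ Fs, hFs.isPeakSet_sInter fun P hP => hPs P (hFsPs hP), ?_, fun y hy => ?_⟩
  · exact Set.sInter_subset_sInter hFsPs (hInt ▸ rfl)
  · by_contra hyU
    obtain ⟨P, hP, hyP⟩ := Set.mem_iUnion₂.mp (hcoverFs hyU)
    exact hyP (hy P hP)

theorem exists_norm_le_of_notMem (hp : IsPPoint A p) {U : Set Y} (hU : IsOpen U) (hpU : p ∈ U)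
    {ε : ℝ} (hε : 0 < ε) :
    ∃ u ∈ A, u p = 1 ∧ (∀ y, ‖u y‖ ≤ 1) ∧ ∀ y ∉ U, ‖u y‖ ≤ ε := by
  obtain ⟨K, hK, hpK, hKU⟩ := hp.exists_isPeakSet_subset hU hpU
  obtain ⟨v, hvA, hv1, hvlt, hv⟩ := hK.exists_norm_le_one
  rcases Uᶜ.eq_empty_or_nonempty with hempty | hne
  · exact ⟨1, A.one_mem, rfl, by simp,
      fun y hy => (Set.eq_empty_iff_forall_notMem.mp hempty y hy).elim⟩
  obtain ⟨y₀, hy₀, hmax⟩ := hU.isClosed_compl.isCompact.exists_isMaxOn hne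
    (continuous_norm.comp v.continuous).continuousOn
  obtain ⟨n, hn⟩ := exists_pow_lt_of_lt_one hε (hvlt y₀ fun h => hy₀ (hKU h))
  refine ⟨v ^ n, pow_mem hvA n, by simp [hv1 p hpK], fun y => ?_, fun y hy => ?_⟩
  · simpa using pow_le_one₀ (norm_nonneg _) (hv y)
  · simpa using (pow_le_pow_left₀ (norm_nonneg _) (hmax hy) n).trans hn.le

theorem exists_norm_mul_le (hp : IsPPoint A p) {f : C(Y, ℂ)} (hf : f p = 0) {ε : ℝ} (hε : 0 < ε) :
    ∃ u ∈ A, u p = 1 ∧ (∀ y, ‖u y‖ ≤ 1) ∧ ∀ y, ‖f y * u y‖ ≤ ε := by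
  obtain ⟨u, huA, hu1, hu, hsmall⟩ := hp.exists_norm_le_of_notMem
    (isOpen_lt (continuous_norm.comp f.continuous) continuous_const)
    (show ‖f p‖ < ε by simpa [hf]) (div_pos hε (by positivity : 0 < ‖f‖ + 1))
  refine ⟨u, huA, hu1, hu, fun y => ?_⟩
  rw [norm_mul]
  by_cases hy : ‖f y‖ < ε
  · exact (mul_le_of_le_one_right (norm_nonneg _) (hu y)).trans hy.le
  · calc ‖f y‖ * ‖u y‖ ≤ ‖f‖ * (ε / (‖f‖ + 1)) :=
          mul_le_mul (f.norm_coe_le_norm y) (hsmall y hy) (norm_nonneg _) (norm_nonneg _)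
      _ ≤ ε := by
          rw [mul_div_assoc', div_le_iff₀ (by positivity)]
          nlinarith

theorem exists_norm_le_mul_re_sq (hA : IsClosed (A : Set C(Y, ℂ))) (hp : IsPPoint A p)
    {f : C(Y, ℂ)} (hf : f p = 0) :
    ∃ h ∈ A, h p = 0 ∧ (∀ y, 0 ≤ (h y).re) ∧ ∀ y, ‖f y‖ ≤ 32 * (‖f‖ + 1) * (h y).re ^ 2 := by
  set M := ‖f‖ + 1
  choose u huA hu1 hu hfu using fun n : ℕ =>
    hp.exists_norm_mul_le hf (ε := M / 4 ^ n) (by positivity)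
  set a : ℕ → C(Y, ℂ) := fun n => ((((2 : ℝ) ^ n)⁻¹ : ℝ) : ℂ) • (1 - u n)
  have ha_apply : ∀ n y, (a n y).re = (1 - (u n y).re) / 2 ^ n := by
    intro n y
    simp only [a, ContinuousMap.smul_apply, smul_eq_mul, Complex.re_ofReal_mul,
      ContinuousMap.sub_apply, ContinuousMap.one_apply,
      Complex.sub_re, Complex.one_re, div_eq_inv_mul]
  have ha_nonneg : ∀ n y, 0 ≤ (a n y).re := fun n y => by
    rw [ha_apply]
    have := (Complex.re_le_norm _).trans (hu n y)
    exact div_nonneg (by linarith) (by positivity)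
  have ha_norm : ∀ n, ‖a n‖ ≤ 2 * (1 / 2) ^ n := by
    intro n
    refine (a n).norm_le (by positivity) |>.mpr fun y => ?_
    calc ‖a n y‖ = ((2 : ℝ) ^ n)⁻¹ * ‖1 - u n y‖ := by
          simp [a, ContinuousMap.smul_apply]
      _ ≤ ((2 : ℝ) ^ n)⁻¹ * (1 + 1) := by
          gcongr
          exact (norm_sub_le _ _).trans (by simpa using hu n y)
      _ = 2 * (1 / 2) ^ n := by rw [one_div, inv_pow]; ring
  have ha_sum : HasSum a (∑' n, a n) :=
    (Summable.of_norm_bounded (summable_geometric_two.mul_left 2) ha_norm).hasSum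
  have hre_sum : ∀ y, HasSum (fun n => (a n y).re) ((∑' n, a n) y).re := fun y =>
    Complex.hasSum_re <|
      ha_sum.map (ContinuousMap.evalCLM ℂ y) (ContinuousMap.evalCLM ℂ y).continuous
  refine ⟨∑' n, a n, tsum_mem hA fun n => A.smul_mem (A.sub_mem A.one_mem (huA n)) _, ?_, ?_, ?_⟩
  · rw [← ContinuousMap.tsum_apply ha_sum.summable]
    simp [a, hu1]
  · exact fun y => (hre_sum y).nonneg (ha_nonneg · y)
  · exact fun y => Complex.norm_le_mul_sq_of_re_bound
      (f.norm_coe_le_norm y |>.trans (by linarith)) (hfu · y)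
      fun n => ha_apply n y ▸ le_hasSum (hre_sum y) n fun m _ => ha_nonneg m y

theorem exists_eq_mul (hA : IsClosed (A : Set C(Y, ℂ))) (hp : IsPPoint A p)
    {f : C(Y, ℂ)} (hf : f ∈ A) (hfp : f p = 0) :
    ∃ g ∈ A, ∃ h ∈ A, g p = 0 ∧ h p = 0 ∧ f = g * h := by
  obtain ⟨h, hh, hhp, hre, hfh⟩ := hp.exists_norm_le_mul_re_sq hA hfp
  obtain ⟨g, hg, hfgh, hgh⟩ := exists_eq_mul_of_norm_le_mul_re_sq hA hf hh hre (by positivity) hfh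
  exact ⟨g, hg, h, hh, norm_le_zero_iff.mp (by simpa [hhp] using hgh p), hhp, hfgh⟩

end IsPPoint

end

theorem stmt0_general {Y : Type*} [TopologicalSpace Y] [CompactSpace Y]
    (A : Subalgebra ℂ C(Y, ℂ)) (hA : IsClosed (A : Set C(Y, ℂ)))
    (p : Y) (hp : IsPPoint A p)
    (L : ↥A →ₗ[ℂ] ℂ)
    (hL : ∀ f g : ↥A, L (f * g) = (f : C(Y, ℂ)) p * L g + (g : C(Y, ℂ)) p * L f) :
    L = 0 := by
  have hL1 : L 1 = 0 := by simpa using hL 1 1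
  ext f
  set c := (f : C(Y, ℂ)) p
  obtain ⟨g, hg, h, hh, hgp, hhp, hfac⟩ := hp.exists_eq_mul hA (f - c • 1).2 (by simp [c])
  have hfac' : f - c • 1 = ⟨g, hg⟩ * ⟨h, hh⟩ := Subtype.ext hfac
  have hLfac := congrArg L hfac'
  rw [hL, map_sub, map_smul, hL1] at hLfac
  simpa [hgp, hhp] using hLfac

/-- If `A` is a uniform algebra (a closed point-separating subalgebra of
`C(Y, ℂ)`) on a compact Hausdorff space `Y` and `p ∈ Y` is a `p`-point of `A`, then
every point derivation of `A` at `p` is identically zero. -/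
theorem stmt0 {Y : Type*} [TopologicalSpace Y] [CompactSpace Y] [T2Space Y]
    (A : Subalgebra ℂ C(Y, ℂ)) (hA : IsClosed (A : Set C(Y, ℂ)))
    (hsep : ∀ y z : Y, y ≠ z → ∃ f ∈ A, f y ≠ f z)
    (p : Y) (hp : IsPPoint A p)
    (L : ↥A →ₗ[ℂ] ℂ)
    (hL : ∀ f g : ↥A, L (f * g) = (f : C(Y, ℂ)) p * L g + (g : C(Y, ℂ)) p * L f) :
    L = 0 :=
  stmt0_general A hA p hp L hL
end

section
/- Let ψ ∈ Ŝ be a semicharacter whose modulus ρ = |ψ| is not an idempotent (ρ ∉ E(Ŝ)). Then the functional L on A(Ŝ) defined by L(F) = (d/dz) F(ρ^z ψ) evaluated at z = 1 is a well-defined point derivation of A(Ŝ) at ψ, and L ≠ 0: for any a ∈ S with 0 < ρ(a) < 1 one has L(â) = ψ(a)·log ρ(a) ≠ 0, where â(ξ) := ξ(a). -/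
open Complex Topology Set

/-- The compact semigroup `Ŝ` of semicharacters of a discrete abelian monoid `S`:
nonzero homomorphisms into the multiplicative semigroup of the closed unit disc,
realized as the set of functions `ψ : S → ℂ` with `ψ 1 = 1`, multiplicative, and
of modulus at most one, endowed with the topology of pointwise convergence. -/
def Shat (S : Type*) [CommMonoid S] : Set (S → ℂ) :=
  {ψ | ψ 1 = 1 ∧ (∀ s t, ψ (s * t) = ψ s * ψ t) ∧ ∀ s, ‖ψ s‖ ≤ 1}

/-- The group `X` of characters of `S`: semicharacters of modulus one. -/
def charGroup (S : Type*) [CommMonoid S] : Set (S → ℂ) :=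
  {ψ | ψ ∈ Shat S ∧ ∀ s, ‖ψ s‖ = 1}

/-- `Ŝ₊`: the set of nonnegative semicharacters of `S`. -/
def ShatPos (S : Type*) [CommMonoid S] : Set (S → ℂ) :=
  {ψ | ψ ∈ Shat S ∧ ∀ s, (ψ s).im = 0 ∧ 0 ≤ (ψ s).re}

/-- `E(Ŝ)`: the set of idempotent semicharacters (taking only the values `0` and `1`). -/
def idemSC (S : Type*) [CommMonoid S] : Set (S → ℂ) :=
  {ψ | ψ ∈ Shat S ∧ ∀ s, ψ s = 0 ∨ ψ s = 1}

/-- The modulus `|ψ|` of a semicharacter. -/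
noncomputable def scMod {S : Type*} (ψ : S → ℂ) : S → ℂ :=
  fun s => (‖ψ s‖ : ℂ)

/-- The power `ρ^z` of a nonnegative semicharacter `ρ` (with `0^z := 0`). -/
noncomputable def scPow {S : Type*} (ρ : S → ℂ) (z : ℂ) : S → ℂ :=
  fun s => if ρ s = 0 then 0 else ρ s ^ z

/-- A function `F` on `Ŝ` is generalized analytic on `Ŝ ∖ X` if for all
`ρ ∈ Ŝ₊ ∖ X` and `ψ ∈ Ŝ ∖ X` the map `z ↦ F (ρ^z ψ)` is analytic on the open
right half-plane and continuous at `0` along `(0, ∞)`. -/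
def GenAnalytic (S : Type*) [CommMonoid S] (F : (S → ℂ) → ℂ) : Prop :=
  ∀ ρ ∈ ShatPos S \ charGroup S, ∀ ψ ∈ Shat S \ charGroup S,
    DifferentiableOn ℂ (fun z : ℂ => F (scPow ρ z * ψ)) {z : ℂ | 0 < z.re} ∧
    ContinuousWithinAt (fun t : ℝ => F (scPow ρ (t : ℂ) * ψ)) (Set.Ioi (0 : ℝ)) 0

/-- Membership in the uniform algebra `A(Ŝ)`: continuous on `Ŝ` and generalized
analytic on `Ŝ ∖ X`. -/
def MemA (S : Type*) [CommMonoid S] (F : (S → ℂ) → ℂ) : Prop :=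
  ContinuousOn F (Shat S) ∧ GenAnalytic S F

/-- Peak sets of the algebra `A(Ŝ)`. -/
def IsPeakSetA (S : Type*) [CommMonoid S] (P : Set (S → ℂ)) : Prop :=
  P ⊆ Shat S ∧ IsClosed P ∧
    ∃ f, MemA S f ∧ (∀ ψ ∈ P, f ψ = 1) ∧ ∀ ψ ∈ Shat S \ P, ‖f ψ‖ < 1

/-- `p`-points of the algebra `A(Ŝ)`: points of `Ŝ` that are intersections of peak sets. -/
def IsPPointA (S : Type*) [CommMonoid S] (p : S → ℂ) : Prop :=
  p ∈ Shat S ∧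
    ∃ Ps : Set (Set (S → ℂ)), (∀ P ∈ Ps, IsPeakSetA S P) ∧ ⋂₀ Ps = {p}

/-- The strong boundary `Γ` of `A(Ŝ)`: the set of all `p`-points. -/
def strongBoundary (S : Type*) [CommMonoid S] : Set (S → ℂ) :=
  {ψ | IsPPointA S ψ}

/-- The coset `ρX` of the character group. -/
def cosetX (S : Type*) [CommMonoid S] (ρ : S → ℂ) : Set (S → ℂ) :=
  {φ | ∃ χ ∈ charGroup S, φ = ρ * χ}

/-- `E₀(Ŝ)`: idempotents `ρ₀` admitting `ρ₁ ∈ Ŝ₊` with `ρ₁ = 1` on `S(ρ₀)` and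
`0 < ρ₁ < 1` off `S(ρ₀)`. -/
def E0 (S : Type*) [CommMonoid S] : Set (S → ℂ) :=
  {ρ₀ | ρ₀ ∈ idemSC S ∧ ∃ ρ₁ ∈ ShatPos S,
    (∀ s, ρ₀ s ≠ 0 → ρ₁ s = 1) ∧ ∀ s, ρ₀ s = 0 → 0 < (ρ₁ s).re ∧ (ρ₁ s).re < 1}

/-- `θ`: the indicator function of `{e}`. -/
noncomputable def theta (S : Type*) [CommMonoid S] : S → ℂ :=
  ({1} : Set S).indicator 1

/-- A closed boundary of `A(Ŝ)`: a closed subset of `Ŝ` on which every function of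
`A(Ŝ)` attains its maximum modulus over `Ŝ`. -/
def IsClosedBoundaryA (S : Type*) [CommMonoid S] (B : Set (S → ℂ)) : Prop :=
  B ⊆ Shat S ∧ IsClosed B ∧
    ∀ f, MemA S f → ∃ ψ ∈ B, ∀ φ ∈ Shat S, ‖f φ‖ ≤ ‖f ψ‖

/-- The Shilov boundary of `A(Ŝ)`: the smallest closed boundary. -/
def shilovA (S : Type*) [CommMonoid S] : Set (S → ℂ) :=
  ⋂₀ {B | IsClosedBoundaryA S B}

/-- An ideal of the semigroup `S`: a nonempty proper subset stable under multiplication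
by `S`. -/
def IsIdealS (S : Type*) [CommMonoid S] (I : Set S) : Prop :=
  I.Nonempty ∧ I ≠ Set.univ ∧ ∀ s : S, ∀ a ∈ I, s * a ∈ I

/-- A simple ideal: an ideal whose complement is a subsemigroup. -/
def IsSimpleIdealS (S : Type*) [CommMonoid S] (I : Set S) : Prop :=
  IsIdealS S I ∧ ∀ a b : S, a ∉ I → b ∉ I → a * b ∉ I


section

variable {S : Type*}

lemma scPow_add (ρ : S → ℂ) (z w : ℂ) : scPow ρ (z + w) = scPow ρ z * scPow ρ w := by
  funext s
  simp only [scPow, Pi.mul_apply]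
  split_ifs with h
  · simp
  · exact cpow_add _ _ h

lemma scPow_one (ρ : S → ℂ) : scPow ρ 1 = ρ := by
  funext s
  simp only [scPow, cpow_one]
  split_ifs with h <;> simp [h]

lemma scMod_apply_eq_zero_iff (ψ : S → ℂ) (s : S) : scMod ψ s = 0 ↔ ψ s = 0 := by
  simp [scMod]

lemma norm_scPow_scMod_apply (ψ : S → ℂ) {z : ℂ} (hz : z.re ≠ 0) (s : S) :
    ‖scPow (scMod ψ) z s‖ = ‖ψ s‖ ^ z.re := by
  by_cases h : ψ s = 0
  · simp [scPow, scMod, h, Real.zero_rpow hz]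
  · rw [scPow, if_neg ((scMod_apply_eq_zero_iff ψ s).not.mpr h), scMod,
      norm_cpow_eq_rpow_re_of_pos (norm_pos_iff.mpr h)]

lemma hasDerivAt_scPow_scMod_apply (ψ : S → ℂ) {s : S} (hs : ψ s ≠ 0) (z : ℂ) :
    HasDerivAt (fun w => scPow (scMod ψ) w s)
      (scPow (scMod ψ) z s * (Real.log ‖ψ s‖ : ℂ)) z := by
  have hρs : scMod ψ s ≠ 0 := (scMod_apply_eq_zero_iff ψ s).not.mpr hs
  simp only [scPow, if_neg hρs]
  rw [scMod, ofReal_log (norm_nonneg _)]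
  have hne : ((‖ψ s‖ : ℝ) : ℂ) ≠ 0 := ofReal_ne_zero.mpr (norm_ne_zero_iff.mpr hs)
  exact (hasStrictDerivAt_const_cpow (Or.inl hne)).hasDerivAt

variable [CommMonoid S]

lemma mul_mem_Shat {φ ψ : S → ℂ} (hφ : φ ∈ Shat S) (hψ : ψ ∈ Shat S) : φ * ψ ∈ Shat S := by
  refine ⟨by simp [hφ.1, hψ.1], fun s t => ?_, fun s => ?_⟩
  · simp only [Pi.mul_apply, hφ.2.1, hψ.2.1]
    ring
  · rw [Pi.mul_apply, norm_mul]
    exact mul_le_one₀ (hφ.2.2 s) (norm_nonneg _) (hψ.2.2 s)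

lemma notMem_charGroup_of_norm_lt_one {φ : S → ℂ} {a : S} (ha : ‖φ a‖ < 1) :
    φ ∉ charGroup S :=
  fun hφ => ha.ne (hφ.2 a)

lemma scMod_mem_ShatPos {ψ : S → ℂ} (hψ : ψ ∈ Shat S) : scMod ψ ∈ ShatPos S := by
  refine ⟨⟨?_, fun s t => ?_, fun s => ?_⟩, fun s => ⟨ofReal_im _, ?_⟩⟩
  · simp [scMod, hψ.1]
  · simp [scMod, hψ.2.1]
  · simpa [scMod] using hψ.2.2 s
  · simp [scMod]

lemma scPow_scMod_map_mul {ψ : S → ℂ} (hψ : ψ ∈ Shat S) (z : ℂ) (s t : S) :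
    scPow (scMod ψ) z (s * t) = scPow (scMod ψ) z s * scPow (scMod ψ) z t := by
  by_cases hs : ψ s = 0
  · simp [scPow, scMod, hψ.2.1, hs]
  by_cases ht : ψ t = 0
  · simp [scPow, scMod, hψ.2.1, ht]
  have hst : ψ (s * t) ≠ 0 := by rw [hψ.2.1]; exact mul_ne_zero hs ht
  simp only [scPow, scMod_apply_eq_zero_iff, if_neg hs, if_neg ht, if_neg hst]
  simp only [scMod, hψ.2.1, norm_mul, ofReal_mul]
  exact mul_cpow_ofReal_nonneg (norm_nonneg _) (norm_nonneg _) z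

lemma scPow_scMod_mem_Shat {ψ : S → ℂ} (hψ : ψ ∈ Shat S) {z : ℂ} (hz : 0 < z.re) :
    scPow (scMod ψ) z ∈ Shat S := by
  refine ⟨?_, scPow_scMod_map_mul hψ z, fun s => ?_⟩
  · simp [scPow, scMod, hψ.1]
  · rw [norm_scPow_scMod_apply ψ hz.ne']
    exact Real.rpow_le_one (norm_nonneg _) (hψ.2.2 s) hz.le

lemma exists_norm_pos_lt_one_of_scMod_notMem_idemSC {ψ : S → ℂ} (hψ : ψ ∈ Shat S)
    (hρ : scMod ψ ∉ idemSC S) : ∃ a, 0 < ‖ψ a‖ ∧ ‖ψ a‖ < 1 := by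
  by_contra! h
  refine hρ ⟨(scMod_mem_ShatPos hψ).1, fun s => ?_⟩
  rcases (norm_nonneg (ψ s)).eq_or_lt with h0 | hpos
  · simp [scMod, ← h0]
  · simp [scMod, le_antisymm (hψ.2.2 s) (h s hpos)]

/-- Shifting by `w / 2`, the map `z ↦ F (ρ^z χ)` near `w` is `z ↦ F (ρ^(z - w/2) ψ₀)` with
`ψ₀ = ρ^(w/2) χ ∈ Ŝ ∖ X`, to which generalized analyticity applies. -/
lemma MemA.differentiableAt_scPow_scMod_mul {F : (S → ℂ) → ℂ} (hF : MemA S F) {ψ χ : S → ℂ}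
    (hψ : ψ ∈ Shat S) (hχ : χ ∈ Shat S) {a : S} (ha0 : 0 < ‖ψ a‖) (ha1 : ‖ψ a‖ < 1)
    {w : ℂ} (hw : 0 < w.re) :
    DifferentiableAt ℂ (fun z => F (scPow (scMod ψ) z * χ)) w := by
  have hw2 : 0 < (w / 2).re := by simpa using hw
  set ψ₀ := scPow (scMod ψ) (w / 2) * χ
  have hρ : scMod ψ ∉ charGroup S :=
    notMem_charGroup_of_norm_lt_one (a := a) (by simpa [scMod] using ha1)
  have hψ₀ : ψ₀ ∉ charGroup S := by
    refine notMem_charGroup_of_norm_lt_one (a := a) ?_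
    calc ‖ψ₀ a‖ = ‖ψ a‖ ^ (w / 2).re * ‖χ a‖ := by
          rw [← norm_scPow_scMod_apply ψ hw2.ne', ← norm_mul]; rfl
      _ ≤ ‖ψ a‖ ^ (w / 2).re := mul_le_of_le_one_right (by positivity) (hχ.2.2 a)
      _ < 1 := Real.rpow_lt_one (norm_nonneg _) ha1 hw2
  have hopen : IsOpen {z : ℂ | 0 < z.re} := isOpen_lt continuous_const continuous_re
  have hd : DifferentiableAt ℂ (fun z => F (scPow (scMod ψ) z * ψ₀)) (w - w / 2) := by
    refine ((hF.2 _ ⟨scMod_mem_ShatPos hψ, hρ⟩ ψ₀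
      ⟨mul_mem_Shat (scPow_scMod_mem_Shat hψ hw2) hχ, hψ₀⟩).1).differentiableAt
      (hopen.mem_nhds ?_)
    simpa [sub_half] using hw2
  have hshift : (fun z => F (scPow (scMod ψ) z * χ)) =
      (fun z => F (scPow (scMod ψ) z * ψ₀)) ∘ (· - w / 2) := by
    funext z
    simp only [Function.comp_apply, ψ₀, ← mul_assoc, ← scPow_add, sub_add_cancel]
  rw [hshift]
  exact hd.comp w (differentiableAt_id.sub_const (w / 2))

end

theorem stmt3_general {S : Type*} [CommMonoid S]
    (ψ χ : S → ℂ) (hψ : ψ ∈ Shat S) (hχ : χ ∈ charGroup S)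
    (hpolar : ψ = scMod ψ * χ) (hρ : scMod ψ ∉ idemSC S) :
    (∀ F, MemA S F → DifferentiableAt ℂ (fun z : ℂ => F (scPow (scMod ψ) z * χ)) 1) ∧
    (∀ F G, MemA S F → MemA S G →
      deriv (fun z : ℂ => (F + G) (scPow (scMod ψ) z * χ)) 1 =
        deriv (fun z : ℂ => F (scPow (scMod ψ) z * χ)) 1 +
          deriv (fun z : ℂ => G (scPow (scMod ψ) z * χ)) 1) ∧
    (∀ (c : ℂ) (F), MemA S F →
      deriv (fun z : ℂ => (c • F) (scPow (scMod ψ) z * χ)) 1 =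
        c * deriv (fun z : ℂ => F (scPow (scMod ψ) z * χ)) 1) ∧
    (∀ F G, MemA S F → MemA S G →
      deriv (fun z : ℂ => (F * G) (scPow (scMod ψ) z * χ)) 1 =
        F ψ * deriv (fun z : ℂ => G (scPow (scMod ψ) z * χ)) 1 +
          G ψ * deriv (fun z : ℂ => F (scPow (scMod ψ) z * χ)) 1) ∧
    (∀ a : S, 0 < ‖ψ a‖ → ‖ψ a‖ < 1 →
      deriv (fun z : ℂ => (scPow (scMod ψ) z * χ) a) 1 =
          ψ a * (Real.log (‖ψ a‖) : ℂ) ∧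
        ψ a * (Real.log (‖ψ a‖) : ℂ) ≠ 0) ∧
    (∃ a : S, 0 < ‖ψ a‖ ∧ ‖ψ a‖ < 1) := by
  obtain ⟨a, ha0, ha1⟩ := exists_norm_pos_lt_one_of_scMod_notMem_idemSC hψ hρ
  have hdiff : ∀ F, MemA S F → DifferentiableAt ℂ (fun z => F (scPow (scMod ψ) z * χ)) 1 :=
    fun F hF => hF.differentiableAt_scPow_scMod_mul hψ hχ.1 ha0 ha1 (by simp)
  have hpoint : scPow (scMod ψ) 1 * χ = ψ := by rw [scPow_one, ← hpolar]
  refine ⟨hdiff, fun F G hF hG => deriv_add (hdiff F hF) (hdiff G hG),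
    fun c F hF => deriv_const_mul c (hdiff F hF), fun F G hF hG => ?_,
    fun b hb0 hb1 => ⟨?_, ?_⟩, a, ha0, ha1⟩
  · rw [Pi.mul_def, deriv_fun_mul (hdiff F hF) (hdiff G hG), hpoint]
    ring
  · have hb : ψ b ≠ 0 := norm_pos_iff.mp hb0
    change deriv (fun z => scPow (scMod ψ) z b * χ b) 1 = _
    rw [((hasDerivAt_scPow_scMod_apply ψ hb 1).mul_const (χ b)).deriv, scPow_one]
    have hψb : ψ b = scMod ψ b * χ b := congrFun hpolar b
    linear_combination -(Real.log ‖ψ b‖ : ℂ) * hψb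
  · exact mul_ne_zero (norm_pos_iff.mp hb0) (ofReal_ne_zero.mpr (Real.log_neg hb0 hb1).ne)

/-- If `ψ ∈ Ŝ` has non-idempotent modulus `ρ = |ψ|` (with polar
decomposition `ψ = ρχ`, `χ ∈ X`), then `L F := (d/dz) F(ρ^z χ)|_{z=1}` is a
well-defined nonzero point derivation of `A(Ŝ)` at `ψ`, and `L(â) = ψ(a) log ρ(a) ≠ 0`
whenever `0 < ρ(a) < 1`. -/
theorem stmt3 {S : Type*} [CommMonoid S] [IsCancelMul S]
    (ψ χ : S → ℂ) (hψ : ψ ∈ Shat S) (hχ : χ ∈ charGroup S)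
    (hpolar : ψ = scMod ψ * χ) (hρ : scMod ψ ∉ idemSC S) :
    (∀ F, MemA S F → DifferentiableAt ℂ (fun z : ℂ => F (scPow (scMod ψ) z * χ)) 1) ∧
    (∀ F G, MemA S F → MemA S G →
      deriv (fun z : ℂ => (F + G) (scPow (scMod ψ) z * χ)) 1 =
        deriv (fun z : ℂ => F (scPow (scMod ψ) z * χ)) 1 +
          deriv (fun z : ℂ => G (scPow (scMod ψ) z * χ)) 1) ∧
    (∀ (c : ℂ) (F), MemA S F →
      deriv (fun z : ℂ => (c • F) (scPow (scMod ψ) z * χ)) 1 =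
        c * deriv (fun z : ℂ => F (scPow (scMod ψ) z * χ)) 1) ∧
    (∀ F G, MemA S F → MemA S G →
      deriv (fun z : ℂ => (F * G) (scPow (scMod ψ) z * χ)) 1 =
        F ψ * deriv (fun z : ℂ => G (scPow (scMod ψ) z * χ)) 1 +
          G ψ * deriv (fun z : ℂ => F (scPow (scMod ψ) z * χ)) 1) ∧
    (∀ a : S, 0 < ‖ψ a‖ → ‖ψ a‖ < 1 →
      deriv (fun z : ℂ => (scPow (scMod ψ) z * χ) a) 1 =
          ψ a * (Real.log (‖ψ a‖) : ℂ) ∧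
        ψ a * (Real.log (‖ψ a‖) : ℂ) ≠ 0) ∧
    (∃ a : S, 0 < ‖ψ a‖ ∧ ‖ψ a‖ < 1) :=
  stmt3_general ψ χ hψ hχ hpolar hρ
end

section
/- Suppose S is countable. Then every character χ ∈ X is a peak point of A(Ŝ): there exists f ∈ A(Ŝ) with f(χ) = 1 and |f(ψ)| < 1 for every ψ ∈ Ŝ with ψ ≠ χ. In particular X is contained in the strong boundary Γ of A(Ŝ). (Such an f is given by f(ψ) = Σₙ ψ(sₙ) · conj(χ(sₙ)) · v(sₙ), where S = {s₁, s₂, …} and v : S → (0, ∞) satisfies Σₙ v(sₙ) = 1.) -/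
open Complex Topology Set

open ComplexConjugate

/-!
The peaking function is the absolutely convergent series `f ψ = ∑ₛ v(s) conj(χ(s)) ψ(s)`.
Each term is continuous in `ψ`, and along `z ↦ ρ^z ψ` it is entire in `z`; the weights dominate
all terms uniformly, so `f ∈ A(Ŝ)`. Clearly `f χ = ∑ₛ v(s) = 1`. If `ψ ≠ χ`, pick `s₀` with
`ψ(s₀) ≠ χ(s₀)`; then `u = conj(χ(s₀)) ψ(s₀)` lies in the closed disc and differs from `1`, so
the two terms at `e` and at `s₀` already satisfy `|v(e) + v(s₀) u| < v(e) + v(s₀)`, and the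
remaining terms cannot make up for this loss.
-/

lemma exists_pos_hasSum_one (ι : Type*) [Countable ι] [Nonempty ι] :
    ∃ v : ι → ℝ, (∀ i, 0 < v i) ∧ HasSum v 1 := by
  cases nonempty_encodable ι
  obtain ⟨w, hw, c, hc, -⟩ := posSumOfEncodable one_pos ι
  obtain ⟨i⟩ := ‹Nonempty ι›
  have hc₀ : 0 < c := (hw i).trans_le (le_hasSum hc i fun j _ => (hw j).le)
  refine ⟨fun i => w i / c, fun i => div_pos (hw i) hc₀, ?_⟩
  simpa [div_self hc₀.ne'] using hc.div_const c

lemma norm_tsum_lt_tsum_of_norm_sum_lt {ι E : Type*} [NormedAddCommGroup E] [CompleteSpace E]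
    {a : ι → E} {w : ι → ℝ} (hw : Summable w) (h : ∀ i, ‖a i‖ ≤ w i) (T : Finset ι)
    (hT : ‖∑ i ∈ T, a i‖ < ∑ i ∈ T, w i) : ‖∑' i, a i‖ < ∑' i, w i := by
  have ha : Summable a := hw.of_norm_bounded h
  rw [← ha.sum_add_tsum_compl (s := T), ← hw.sum_add_tsum_compl (s := T)]
  calc ‖∑ i ∈ T, a i + ∑' i : ↑(T : Set ι)ᶜ, a i‖
      ≤ ‖∑ i ∈ T, a i‖ + ‖∑' i : ↑(T : Set ι)ᶜ, a i‖ := norm_add_le _ _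
    _ < ∑ i ∈ T, w i + ∑' i : ↑(T : Set ι)ᶜ, w i :=
      add_lt_add_of_lt_of_le hT (tsum_of_norm_bounded (hw.subtype _).hasSum fun i => h i)

lemma norm_mul_le_of_norm_le_one {α : Type*} [SeminormedRing α] (a : α) {b : α}
    (hb : ‖b‖ ≤ 1) : ‖a * b‖ ≤ ‖a‖ :=
  (norm_mul_le a b).trans (mul_le_of_le_one_right (norm_nonneg a) hb)

lemma Complex.re_lt_one_of_norm_le_one {z : ℂ} (hz : ‖z‖ ≤ 1) (h1 : z ≠ 1) : z.re < 1 := by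
  refine lt_of_le_of_ne ((re_le_norm z).trans hz) fun hre => h1 ?_
  have him : z.im = 0 :=
    abs_re_eq_norm.1 (le_antisymm (abs_re_le_norm z) (by rwa [hre, abs_one]))
  exact Complex.ext (by simpa using hre) (by simpa using him)

lemma Complex.norm_ofReal_add_ofReal_mul_lt {a b : ℝ} (ha : 0 < a) (hb : 0 < b) {z : ℂ}
    (hz : ‖z‖ ≤ 1) (h1 : z ≠ 1) : ‖(a + b * z : ℂ)‖ < a + b := by
  have hre := re_lt_one_of_norm_le_one hz h1
  have hsq : z.re * z.re + z.im * z.im ≤ 1 := by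
    rw [← normSq_apply, ← Complex.sq_norm]
    exact pow_le_one₀ (norm_nonneg z) hz
  rw [← sq_lt_sq₀ (norm_nonneg _) (by positivity), Complex.sq_norm, normSq_apply]
  simp only [add_re, add_im, mul_re, mul_im, ofReal_re, ofReal_im]
  nlinarith [mul_pos (mul_pos ha hb) (sub_pos.2 hre), mul_nonneg (mul_nonneg hb.le hb.le)
    (sub_nonneg.2 hsq)]

lemma Complex.conj_mul_self_of_norm_eq_one {z : ℂ} (hz : ‖z‖ = 1) : conj z * z = 1 := by
  rw [conj_mul', hz]
  norm_num

def IsPeakPointA (S : Type*) [CommMonoid S] (p : S → ℂ) : Prop :=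
  ∃ f, MemA S f ∧ f p = 1 ∧ ∀ ψ ∈ Shat S, ψ ≠ p → ‖f ψ‖ < 1

section Semicharacters

variable {S : Type*}

lemma differentiable_scPow_apply (ρ : S → ℂ) (s : S) :
    Differentiable ℂ fun z => scPow ρ z s := by
  by_cases h : ρ s = 0
  · simp only [scPow, h, if_true]
    exact differentiable_const 0
  · simp only [scPow, h, if_false]
    exact differentiable_id.const_cpow (Or.inl h)

variable [CommMonoid S]

lemma norm_scPow_apply_le_one {ρ : S → ℂ} (hρ : ρ ∈ ShatPos S) {z : ℂ} (hz : 0 ≤ z.re)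
    (s : S) : ‖scPow ρ z s‖ ≤ 1 := by
  by_cases h : ρ s = 0
  · simp [scPow, h]
  · obtain ⟨him, hre⟩ := hρ.2 s
    have hρs : ρ s = ((ρ s).re : ℂ) := Complex.ext (by simp) (by simp [him])
    have hpos : 0 < (ρ s).re := hre.lt_of_ne fun h0 => h (by rw [hρs, ← h0, Complex.ofReal_zero])
    simp only [scPow, h, if_false]
    rw [hρs, Complex.norm_cpow_eq_rpow_re_of_pos hpos]
    exact Real.rpow_le_one hpos.le ((Complex.re_le_norm _).trans (hρ.1.2.2 s)) hz

lemma norm_scPow_mul_apply_le_one {ρ ψ : S → ℂ} (hρ : ρ ∈ ShatPos S) (hψ : ψ ∈ Shat S)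
    {z : ℂ} (hz : 0 ≤ z.re) (s : S) : ‖(scPow ρ z * ψ) s‖ ≤ 1 := by
  rw [Pi.mul_apply, norm_mul]
  exact mul_le_one₀ (norm_scPow_apply_le_one hρ hz s) (norm_nonneg _) (hψ.2.2 s)

lemma memA_tsum_mul {c : S → ℂ} (hc : Summable fun s => ‖c s‖) :
    MemA S fun ψ => ∑' s, c s * ψ s := by
  refine ⟨continuousOn_tsum (fun s => (continuous_const.mul (continuous_apply s)).continuousOn)
    hc fun s ψ hψ => norm_mul_le_of_norm_le_one _ (hψ.2.2 s), fun ρ hρ ψ hψ => ?_⟩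
  have hterm : ∀ s, Differentiable ℂ fun z => c s * (scPow ρ z * ψ) s := fun s =>
    (differentiable_const _).mul ((differentiable_scPow_apply ρ s).mul_const _)
  have hbound : ∀ s, ∀ z : ℂ, 0 ≤ z.re → ‖c s * (scPow ρ z * ψ) s‖ ≤ ‖c s‖ := fun s z hz =>
    norm_mul_le_of_norm_le_one _ (norm_scPow_mul_apply_le_one hρ.1 hψ.1 hz s)
  constructor
  · exact differentiableOn_tsum_of_summable_norm hc (fun s => (hterm s).differentiableOn)
      (isOpen_lt continuous_const Complex.continuous_re) fun s z hz => hbound s z hz.le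
  · have hcont : ContinuousOn (fun z : ℂ => ∑' s, c s * (scPow ρ z * ψ) s) {z | 0 ≤ z.re} :=
      continuousOn_tsum (fun s => (hterm s).continuous.continuousOn) hc hbound
    have hreal := hcont.comp Complex.continuous_ofReal.continuousOn
      (fun t (ht : t ∈ Ici (0 : ℝ)) => by simpa using ht)
    exact (hreal 0 self_mem_Ici).mono Ioi_subset_Ici_self

lemma IsPeakPointA.isPeakSetA_singleton {p : S → ℂ} (hp : p ∈ Shat S)
    (h : IsPeakPointA S p) : IsPeakSetA S {p} := by
  obtain ⟨f, hf, hfp, hlt⟩ := h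
  refine ⟨singleton_subset_iff.2 hp, isClosed_singleton, f, hf, fun ψ hψ => ?_,
    fun ψ hψ => hlt ψ hψ.1 hψ.2⟩
  rwa [mem_singleton_iff.1 hψ]

lemma IsPeakPointA.mem_strongBoundary {p : S → ℂ} (hp : p ∈ Shat S) (h : IsPeakPointA S p) :
    p ∈ strongBoundary S :=
  ⟨hp, {{p}}, fun _ hP => mem_singleton_iff.1 hP ▸ h.isPeakSetA_singleton hp, sInter_singleton _⟩

section Character

variable {χ : S → ℂ} {v : S → ℝ}

lemma norm_ofReal_mul_conj_of_mem_charGroup (hχ : χ ∈ charGroup S) (r : ℝ) (s : S) :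
    ‖(r : ℂ) * conj (χ s)‖ = |r| := by
  rw [norm_mul, Complex.norm_conj, hχ.2 s, mul_one, Complex.norm_real, Real.norm_eq_abs]

lemma tsum_ofReal_mul_conj_mul_self (hχ : χ ∈ charGroup S) (hv : HasSum v 1) :
    ∑' s, v s * conj (χ s) * χ s = 1 := by
  simp_rw [mul_assoc, Complex.conj_mul_self_of_norm_eq_one (hχ.2 _), mul_one]
  exact_mod_cast (Complex.hasSum_ofReal.2 hv).tsum_eq

lemma norm_tsum_ofReal_mul_conj_mul_lt_one (hχ : χ ∈ charGroup S) (hv₀ : ∀ s, 0 < v s)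
    (hv : HasSum v 1) {ψ : S → ℂ} (hψ : ψ ∈ Shat S) (hne : ψ ≠ χ) :
    ‖∑' s, v s * conj (χ s) * ψ s‖ < 1 := by
  classical
  obtain ⟨s₀, hs₀⟩ := Function.ne_iff.1 hne
  have h1s₀ : 1 ≠ s₀ := by
    rintro rfl
    exact hs₀ (hψ.1.trans hχ.1.1.symm)
  set u := conj (χ s₀) * ψ s₀
  have hu : ‖u‖ ≤ 1 := by
    rw [norm_mul, Complex.norm_conj, hχ.2 s₀, one_mul]
    exact hψ.2.2 s₀
  have hu1 : u ≠ 1 := fun h => hs₀ <| by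
    linear_combination χ s₀ * h - ψ s₀ * Complex.conj_mul_self_of_norm_eq_one (hχ.2 s₀)
  have hpair : ∑ s ∈ {1, s₀}, v s * conj (χ s) * ψ s = v 1 + v s₀ * u := by
    rw [Finset.sum_pair h1s₀, hχ.1.1, hψ.1, map_one, mul_one, mul_one, mul_assoc]
  have hterm : ∀ s, ‖v s * conj (χ s) * ψ s‖ ≤ v s := fun s =>
    calc ‖v s * conj (χ s) * ψ s‖ ≤ ‖(v s : ℂ) * conj (χ s)‖ :=
          norm_mul_le_of_norm_le_one _ (hψ.2.2 s)
      _ = v s := by rw [norm_ofReal_mul_conj_of_mem_charGroup hχ, abs_of_pos (hv₀ s)]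
  rw [← hv.tsum_eq]
  refine norm_tsum_lt_tsum_of_norm_sum_lt hv.summable hterm {1, s₀} ?_
  rw [hpair, Finset.sum_pair h1s₀]
  exact Complex.norm_ofReal_add_ofReal_mul_lt (hv₀ 1) (hv₀ s₀) hu hu1

lemma isPeakPointA_of_mem_charGroup [Countable S] (hχ : χ ∈ charGroup S) :
    IsPeakPointA S χ := by
  obtain ⟨v, hv₀, hv⟩ := exists_pos_hasSum_one S
  refine ⟨fun ψ => ∑' s, v s * conj (χ s) * ψ s, memA_tsum_mul ?_,
    tsum_ofReal_mul_conj_mul_self hχ hv, fun ψ hψ hne =>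
      norm_tsum_ofReal_mul_conj_mul_lt_one hχ hv₀ hv hψ hne⟩
  exact hv.summable.abs.congr fun s => (norm_ofReal_mul_conj_of_mem_charGroup hχ (v s) s).symm

end Character

end Semicharacters

theorem stmt8_general {S : Type*} [CommMonoid S] [Countable S] :
    (∀ χ ∈ charGroup S, ∃ f, MemA S f ∧ f χ = 1 ∧
      ∀ ψ ∈ Shat S, ψ ≠ χ → ‖f ψ‖ < 1) ∧
    charGroup S ⊆ strongBoundary S :=
  ⟨fun _ hχ => isPeakPointA_of_mem_charGroup hχ,
    fun _ hχ => (isPeakPointA_of_mem_charGroup hχ).mem_strongBoundary hχ.1⟩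

/-- If `S` is countable, then every character `χ ∈ X` is a peak point of
`A(Ŝ)`; in particular `X` is contained in the strong boundary of `A(Ŝ)`. -/
theorem stmt8 {S : Type*} [CommMonoid S] [IsCancelMul S] [Countable S] :
    (∀ χ ∈ charGroup S, ∃ f, MemA S f ∧ f χ = 1 ∧
      ∀ ψ ∈ Shat S, ψ ≠ χ → ‖f ψ‖ < 1) ∧
    charGroup S ⊆ strongBoundary S :=
  stmt8_general
end

section
/- Let α, β be irrational real numbers with β < α < 0, and let S_{αβ} = {(m, n) ∈ ℤ² : αm ≤ n and βm ≤ n}. Then S_{αβ} is a cancellative abelian submonoid of ℤ² (with identity (0,0)) that contains no nontrivial simple ideals. Moreover, if in addition α − β > 1, then S_{αβ} ∖ {(0, 1)} is also a cancellative abelian submonoid of ℤ² containing no nontrivial simple ideals. -/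
/-- An ideal of an additive submonoid-like subset `T` of `ℤ × ℤ`: a nonempty proper
subset `I ⊆ T` with `T + I ⊆ I`. -/
def IsIdealIn (T I : Set (ℤ × ℤ)) : Prop :=
  I ⊆ T ∧ I.Nonempty ∧ I ≠ T ∧ ∀ s ∈ T, ∀ a ∈ I, s + a ∈ I

/-- A simple ideal: an ideal whose complement in `T` is a subsemigroup. -/
def IsSimpleIdealIn (T I : Set (ℤ × ℤ)) : Prop :=
  IsIdealIn T I ∧ ∀ a ∈ T \ I, ∀ b ∈ T \ I, a + b ∈ T \ I

/-- A nontrivial simple ideal: a simple ideal different from `T ∖ {0}`. -/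
def IsNontrivialSimpleIdealIn (T I : Set (ℤ × ℤ)) : Prop :=
  IsSimpleIdealIn T I ∧ I ≠ T \ {0}

/-!
Irrationality of `α` and `β` puts every nonzero point of `S_{αβ}` strictly above both
lines, so each nonzero `s ∈ S_{αβ}` dominates every `a ∈ S_{αβ}`: `k • s - a ∈ S_{αβ}` for
large `k`. A simple ideal `I` of such a monoid contains every nonzero `s`, for otherwise all
multiples of `s` stay in the subsemigroup `S_{αβ} ∖ I`, while `k • s = (k • s - a) + a ∈ I`
for `a ∈ I`. When `α - β > 1`, `(0, 1)` is an atom of `S_{αβ}`, so removing it leaves a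
monoid, and the domination property survives the removal of a point.
-/

open Filter

def IsArchimedeanIn {G : Type*} [AddCommGroup G] (T : Set G) : Prop :=
  ∀ s ∈ T, s ≠ 0 → ∀ a ∈ T, ∃ k : ℕ, k • s - a ∈ T

/-- When `k • s - a = x`, the next multiple gives `x + s ≠ x`. -/
lemma IsArchimedeanIn.diff_singleton {G : Type*} [AddCommGroup G] {T : Set G}
    (hT : IsArchimedeanIn T) (hadd : ∀ a ∈ T, ∀ b ∈ T, a + b ∈ T) (x : G) :
    IsArchimedeanIn (T \ {x}) := by
  rintro s ⟨hsT, -⟩ hs0 a ⟨haT, -⟩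
  obtain ⟨k, hk⟩ := hT s hsT hs0 a haT
  by_cases hkx : k • s - a = x
  · have hsucc : (k + 1) • s - a = (k • s - a) + s := by rw [succ_nsmul]; abel
    refine ⟨k + 1, ?_, ?_⟩
    · rw [hsucc]
      exact hadd _ hk s hsT
    · rw [hsucc, hkx, Set.mem_singleton_iff, add_eq_left]
      exact hs0
  · exact ⟨k, hk, hkx⟩

lemma IsSimpleIdealIn.eq_diff_zero {T I : Set (ℤ × ℤ)} (hI : IsSimpleIdealIn T I)
    (h0 : (0 : ℤ × ℤ) ∈ T) (hT : IsArchimedeanIn T) : I = T \ {0} := by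
  obtain ⟨⟨hIT, ⟨a, haI⟩, hIT_ne, hideal⟩, hcompl⟩ := hI
  have h0I : (0 : ℤ × ℤ) ∉ I := fun h0I =>
    hIT_ne <| hIT.antisymm fun s hs => by simpa using hideal s hs 0 h0I
  ext s
  refine ⟨fun hsI => ⟨hIT hsI, fun hs0 => h0I (Set.mem_singleton_iff.1 hs0 ▸ hsI)⟩, ?_⟩
  rintro ⟨hsT, hs0⟩
  by_contra hsI
  have hmul : ∀ k : ℕ, k • s ∈ T \ I := by
    intro k
    induction k with
    | zero => simpa using ⟨h0, h0I⟩
    | succ k ih => rw [succ_nsmul]; exact hcompl _ ih s ⟨hsT, hsI⟩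
  obtain ⟨k, hk⟩ := hT s hsT hs0 a (hIT haI)
  exact (hmul k).2 (by simpa using hideal _ hk a haI)

def halfPlane (γ : ℝ) : Set (ℤ × ℤ) := {p | γ * p.1 ≤ p.2}

lemma zero_mem_halfPlane (γ : ℝ) : (0 : ℤ × ℤ) ∈ halfPlane γ := by
  simp [halfPlane]

lemma add_mem_halfPlane {γ : ℝ} {a b : ℤ × ℤ} (ha : a ∈ halfPlane γ) (hb : b ∈ halfPlane γ) :
    a + b ∈ halfPlane γ := by
  simp only [halfPlane, Set.mem_ofPred_eq, Prod.fst_add, Prod.snd_add, Int.cast_add] at *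
  linarith

/-- A line of irrational slope meets `ℤ²` only at the origin. -/
lemma lt_of_mem_halfPlane {γ : ℝ} (hγ : Irrational γ) {s : ℤ × ℤ} (hs : s ∈ halfPlane γ)
    (hs0 : s ≠ 0) : γ * s.1 < s.2 := by
  refine lt_of_le_of_ne hs fun heq => hs0 ?_
  rcases eq_or_ne s.1 0 with h1 | h1
  · have h2 : s.2 = 0 := by exact_mod_cast (by simpa [h1] using heq.symm : (s.2 : ℝ) = 0)
    exact Prod.ext h1 h2
  · exact absurd heq ((hγ.mul_intCast h1).ne_int s.2)

lemma eventually_nsmul_sub_mem_halfPlane {γ : ℝ} {s : ℤ × ℤ} (hs : γ * s.1 < s.2)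
    (a : ℤ × ℤ) : ∀ᶠ k : ℕ in atTop, k • s - a ∈ halfPlane γ := by
  have hlim : Tendsto (fun k : ℕ => (k : ℝ) * (s.2 - γ * s.1) + (γ * a.1 - a.2)) atTop atTop :=
    tendsto_atTop_add_const_right _ _
      (tendsto_natCast_atTop_atTop.atTop_mul_const (sub_pos.2 hs))
  filter_upwards [hlim.eventually_ge_atTop 0] with k hk
  simp only [halfPlane, Set.mem_ofPred_eq, Prod.fst_sub, Prod.snd_sub, Prod.smul_fst,
    Prod.smul_snd]
  push_cast [nsmul_eq_mul]
  linarith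

/-- The monoid `S_{αβ}`. -/
def slopeCone (α β : ℝ) : Set (ℤ × ℤ) := halfPlane α ∩ halfPlane β

lemma zero_mem_slopeCone (α β : ℝ) : (0 : ℤ × ℤ) ∈ slopeCone α β :=
  ⟨zero_mem_halfPlane α, zero_mem_halfPlane β⟩

lemma add_mem_slopeCone (α β : ℝ) :
    ∀ a ∈ slopeCone α β, ∀ b ∈ slopeCone α β, a + b ∈ slopeCone α β :=
  fun _ ha _ hb => ⟨add_mem_halfPlane ha.1 hb.1, add_mem_halfPlane ha.2 hb.2⟩

lemma isArchimedeanIn_slopeCone {α β : ℝ} (hα : Irrational α) (hβ : Irrational β) :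
    IsArchimedeanIn (slopeCone α β) := by
  intro s hs hs0 a _
  exact ((eventually_nsmul_sub_mem_halfPlane (lt_of_mem_halfPlane hα hs.1 hs0) a).and
    (eventually_nsmul_sub_mem_halfPlane (lt_of_mem_halfPlane hβ hs.2 hs0) a)).exists

/-- For `(0, 1) = (m, n) + (-m, 1 - n)` with `m ≠ 0`, one constraint on each summand adds
up to `(α - β) |m| ≤ 1`. -/
lemma eq_or_eq_of_add_eq_zero_one {α β : ℝ} (hgap : 1 < α - β) {a b : ℤ × ℤ}
    (ha : a ∈ slopeCone α β) (hb : b ∈ slopeCone α β) (hab : a + b = (0, 1)) :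
    a = (0, 1) ∨ b = (0, 1) := by
  obtain ⟨m, n⟩ := a
  obtain ⟨p, q⟩ := b
  simp only [slopeCone, halfPlane, Set.mem_inter_iff, Set.mem_ofPred_eq, Prod.mk_add_mk,
    Prod.mk.injEq] at ha hb hab ⊢
  obtain ⟨hαa, hβa⟩ := ha
  obtain ⟨hαb, hβb⟩ := hb
  obtain ⟨rfl, rfl⟩ : p = -m ∧ q = 1 - n := by omega
  push_cast at hαb hβb
  rcases lt_trichotomy m 0 with hm | rfl | hm
  · have : (m : ℝ) ≤ -1 := by exact_mod_cast Int.le_sub_one_of_lt hm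
    nlinarith
  · simp only [Int.cast_zero, mul_zero, neg_zero] at hαa hαb
    have hn0 : 0 ≤ n := by exact_mod_cast hαa
    have hn1 : n ≤ 1 := by exact_mod_cast (show (n : ℝ) ≤ 1 by linarith)
    omega
  · have : (1 : ℝ) ≤ m := by exact_mod_cast hm
    nlinarith

lemma add_mem_slopeCone_diff_zero_one {α β : ℝ} (hgap : 1 < α - β) :
    ∀ a ∈ slopeCone α β \ {((0 : ℤ), (1 : ℤ))}, ∀ b ∈ slopeCone α β \ {((0 : ℤ), (1 : ℤ))},
      a + b ∈ slopeCone α β \ {((0 : ℤ), (1 : ℤ))} := by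
  rintro a ⟨ha, ha1⟩ b ⟨hb, hb1⟩
  refine ⟨add_mem_slopeCone α β a ha b hb, fun hab => ?_⟩
  rcases eq_or_eq_of_add_eq_zero_one hgap ha hb hab with rfl | rfl
  exacts [ha1 rfl, hb1 rfl]

theorem stmt19_general (α β : ℝ) (hα : Irrational α) (hβ : Irrational β) :
    (0 : ℤ × ℤ) ∈ {p : ℤ × ℤ | α * p.1 ≤ p.2 ∧ β * p.1 ≤ p.2} ∧
    (∀ a ∈ {p : ℤ × ℤ | α * p.1 ≤ p.2 ∧ β * p.1 ≤ p.2},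
      ∀ b ∈ {p : ℤ × ℤ | α * p.1 ≤ p.2 ∧ β * p.1 ≤ p.2},
        a + b ∈ {p : ℤ × ℤ | α * p.1 ≤ p.2 ∧ β * p.1 ≤ p.2}) ∧
    (∀ a b c : ℤ × ℤ, a + b = a + c → b = c) ∧
    (∀ I : Set (ℤ × ℤ),
      IsSimpleIdealIn {p : ℤ × ℤ | α * p.1 ≤ p.2 ∧ β * p.1 ≤ p.2} I →
        I = {p : ℤ × ℤ | α * p.1 ≤ p.2 ∧ β * p.1 ≤ p.2} \ {0}) ∧
    (α - β > 1 →
      (0 : ℤ × ℤ) ∈ {p : ℤ × ℤ | α * p.1 ≤ p.2 ∧ β * p.1 ≤ p.2} \ {((0 : ℤ), (1 : ℤ))} ∧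
      (∀ a ∈ {p : ℤ × ℤ | α * p.1 ≤ p.2 ∧ β * p.1 ≤ p.2} \ {((0 : ℤ), (1 : ℤ))},
        ∀ b ∈ {p : ℤ × ℤ | α * p.1 ≤ p.2 ∧ β * p.1 ≤ p.2} \ {((0 : ℤ), (1 : ℤ))},
          a + b ∈ {p : ℤ × ℤ | α * p.1 ≤ p.2 ∧ β * p.1 ≤ p.2} \ {((0 : ℤ), (1 : ℤ))}) ∧
      (∀ I : Set (ℤ × ℤ),
        IsSimpleIdealIn
            ({p : ℤ × ℤ | α * p.1 ≤ p.2 ∧ β * p.1 ≤ p.2} \ {((0 : ℤ), (1 : ℤ))}) I →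
          I = ({p : ℤ × ℤ | α * p.1 ≤ p.2 ∧ β * p.1 ≤ p.2} \ {((0 : ℤ), (1 : ℤ))}) \ {0})) := by
  have h0 := zero_mem_slopeCone α β
  have hS := isArchimedeanIn_slopeCone hα hβ
  have h0' : (0 : ℤ × ℤ) ∈ slopeCone α β \ {((0 : ℤ), (1 : ℤ))} := ⟨h0, by simp [Prod.ext_iff]⟩
  exact ⟨h0, add_mem_slopeCone α β, fun _ _ _ => add_left_cancel,
    fun _ hI => hI.eq_diff_zero h0 hS, fun hgap => ⟨h0', add_mem_slopeCone_diff_zero_one hgap,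
      fun _ hI => hI.eq_diff_zero h0' (hS.diff_singleton (add_mem_slopeCone α β) _)⟩⟩

/-- For irrational `β < α < 0`, the set
`S_{αβ} = {(m, n) ∈ ℤ² : αm ≤ n ∧ βm ≤ n}` is a cancellative abelian submonoid of `ℤ²`
with no nontrivial simple ideals; and if moreover `α - β > 1`, the same holds for
`S_{αβ} ∖ {(0, 1)}`. -/
theorem stmt19 (α β : ℝ) (hα : Irrational α) (hβ : Irrational β)
    (hβα : β < α) (hα0 : α < 0) :
    (0 : ℤ × ℤ) ∈ {p : ℤ × ℤ | α * p.1 ≤ p.2 ∧ β * p.1 ≤ p.2} ∧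
    (∀ a ∈ {p : ℤ × ℤ | α * p.1 ≤ p.2 ∧ β * p.1 ≤ p.2},
      ∀ b ∈ {p : ℤ × ℤ | α * p.1 ≤ p.2 ∧ β * p.1 ≤ p.2},
        a + b ∈ {p : ℤ × ℤ | α * p.1 ≤ p.2 ∧ β * p.1 ≤ p.2}) ∧
    (∀ a b c : ℤ × ℤ, a + b = a + c → b = c) ∧
    (∀ I : Set (ℤ × ℤ),
      IsSimpleIdealIn {p : ℤ × ℤ | α * p.1 ≤ p.2 ∧ β * p.1 ≤ p.2} I →
        I = {p : ℤ × ℤ | α * p.1 ≤ p.2 ∧ β * p.1 ≤ p.2} \ {0}) ∧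
    (α - β > 1 →
      (0 : ℤ × ℤ) ∈ {p : ℤ × ℤ | α * p.1 ≤ p.2 ∧ β * p.1 ≤ p.2} \ {((0 : ℤ), (1 : ℤ))} ∧
      (∀ a ∈ {p : ℤ × ℤ | α * p.1 ≤ p.2 ∧ β * p.1 ≤ p.2} \ {((0 : ℤ), (1 : ℤ))},
        ∀ b ∈ {p : ℤ × ℤ | α * p.1 ≤ p.2 ∧ β * p.1 ≤ p.2} \ {((0 : ℤ), (1 : ℤ))},
          a + b ∈ {p : ℤ × ℤ | α * p.1 ≤ p.2 ∧ β * p.1 ≤ p.2} \ {((0 : ℤ), (1 : ℤ))}) ∧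
      (∀ I : Set (ℤ × ℤ),
        IsSimpleIdealIn
            ({p : ℤ × ℤ | α * p.1 ≤ p.2 ∧ β * p.1 ≤ p.2} \ {((0 : ℤ), (1 : ℤ))}) I →
          I = ({p : ℤ × ℤ | α * p.1 ≤ p.2 ∧ β * p.1 ≤ p.2} \ {((0 : ℤ), (1 : ℤ))}) \ {0})) :=
  stmt19_general α β hα hβ
end
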